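/- Base change for coproduct induction: given a pullback square of finite G-sets with D = A ×_Y B, r' : D → A, t' : D → B the projections, and t : A → Y, r : B → Y the given maps, there is a natural isomorphism of functors r^* ∘ t^∨_* ≅ (t')^∨_* ∘ (r')^* from Fun(B_G A, C) to Fun(B_G B, C), for any category C with finite coproducts. -/

import Mathlib

open CategoryTheory

/-- The translation category `B_G(X)` of a `G`-set `X`: objects are elements of `X`,
and for each `g : G` there is a morphism `g : x → g • x`. -/
abbrev Translation (G : Type) [Group G] (X : Type) [MulAction G X] : Type := X

instance Translation.category (G : Type) [Group G] (X : Type) [MulAction G X] :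
    Category (Translation G X) where
  Hom x y := {g : G // g • x = y}
  id x := ⟨1, one_smul G x⟩
  comp f g := ⟨g.1 * f.1, by rw [mul_smul, f.2, g.2]⟩
  id_comp f := Subtype.ext (mul_one _)
  comp_id f := Subtype.ext (one_mul _)
  assoc f g h := Subtype.ext (mul_assoc _ _ _).symm

/-- The functor `B_G(X) → B_G(Y)` induced by a `G`-equivariant map, sending `x` to
`f(x)` and the morphism `g : x → g•x` to `g : f(x) → g•f(x)`. -/
def translationMap {G : Type} [Group G] {X Y : Type} [MulAction G X] [MulAction G Y]
    (f : X → Y) (hf : ∀ (g : G) (x : X), f (g • x) = g • f x) :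
    Translation G X ⥤ Translation G Y where
  obj x := f x
  map {x y} m := ⟨m.1, (hf m.1 x).symm.trans (congrArg f m.2)⟩
  map_id _ := rfl
  map_comp _ _ := rfl

universe v u

variable {G : Type} [Group G] {A B Y : Type} [MulAction G A] [MulAction G B] [MulAction G Y]

/-- The pullback `A ×_Y B` of `G`-sets along equivariant maps, with the diagonal action. -/
def GPullback (t : A →[G] Y) (r : B →[G] Y) : Type := {p : A × B // t p.1 = r p.2}

instance GPullback.mulAction (t : A →[G] Y) (r : B →[G] Y) :
    MulAction G (GPullback t r) where
  smul g p := ⟨(g • p.1.1, g • p.1.2), by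
    show t (g • p.1.1) = r (g • p.1.2); rw [map_smul, map_smul, p.2]⟩
  one_smul p := Subtype.ext (Prod.ext (one_smul G _) (one_smul G _))
  mul_smul g₁ g₂ p := Subtype.ext (Prod.ext (mul_smul g₁ g₂ _) (mul_smul g₁ g₂ _))

/-! Coproduct induction along an equivariant `f : X → Z` is computed fibrewise,
`F ↦ (z ↦ ∐_{f x = z} F x)`, and this functor is left adjoint to precomposition with `f`;
so `Lt` and `Lt'` are isomorphic to the fibrewise coproducts by uniqueness of adjoints.
For the pullback square, the fibre of `t` over `r b` is in bijection with the fibre of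
`D → B` over `b` via `a ↦ (a, b)`, and this bijection reindexes one coproduct into the other,
naturally in `b` and in the functor. -/

namespace Translation

open Limits

variable {X Z : Type} [MulAction G X] [MulAction G Z] {C : Type u} [Category.{v} C]

lemma map_comp_eqToHom_eq_eqToHom_comp_map (F : Translation G X ⥤ C)
    {x x' y y' : Translation G X} (a : x ⟶ y) (b : x' ⟶ y') (hx : x = x') (h : a.1 = b.1)
    (e : F.obj y = F.obj y') (e' : F.obj x = F.obj x') :
    F.map a ≫ eqToHom e = eqToHom e' ≫ F.map b := by
  subst hx
  obtain rfl : y = y' := a.2.symm.trans (h ▸ b.2)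
  simp only [eqToHom_refl, Category.comp_id, Category.id_comp]
  exact congrArg F.map (Subtype.ext h)

lemma map_comp_eqToHom (F : Translation G X ⥤ C) {x y y' : Translation G X} (a : x ⟶ y)
    (b : x ⟶ y') (h : a.1 = b.1) (e : F.obj y = F.obj y') :
    F.map a ≫ eqToHom e = F.map b := by
  simpa using map_comp_eqToHom_eq_eqToHom_comp_map F a b rfl h e rfl

variable [HasCoproducts.{0} C]

-- Instance search does not reach this from `HasCoproducts.{0} C` within its default budget.
instance hasCoproduct_of_hasCoproducts {ι : Type} (F : ι → C) : HasCoproduct F :=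
  HasColimitsOfShape.has_colimit _

variable (f : X → Z) (hf : ∀ (g : G) (x : X), f (g • x) = g • f x)

noncomputable def coprodIndObj (F : Translation G X ⥤ C) : Translation G Z ⥤ C where
  obj z := ∐ fun x : {x : X // f x = z} => F.obj x.1
  map m := Sigma.map' (fun x => ⟨m.1 • x.1, by rw [hf, x.2, m.2]⟩)
    fun x => F.map (⟨m.1, rfl⟩ : (x.1 : Translation G X) ⟶ m.1 • x.1)
  map_id z := by
    rw [← Sigma.map'_id_id]
    refine Sigma.map'_eq (funext fun x => Subtype.ext (one_smul G x.1)) fun x => ?_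
    rw [← F.map_id]
    exact map_comp_eqToHom F _ _ (by rfl) _
  map_comp m m' := by
    rw [Sigma.map'_comp_map']
    refine Sigma.map'_eq (funext fun x => Subtype.ext (mul_smul m'.1 m.1 x.1)) fun x => ?_
    rw [← F.map_comp]
    exact map_comp_eqToHom F _ _ (by rfl) _

lemma ι_coprodIndObj_map (F : Translation G X ⥤ C) {z z' : Translation G Z} (m : z ⟶ z')
    (x : {x : X // f x = z}) :
    Sigma.ι (fun x : {x : X // f x = z} => F.obj x.1) x ≫ (coprodIndObj f hf F).map m =
      F.map (⟨m.1, rfl⟩ : (x.1 : Translation G X) ⟶ m.1 • x.1) ≫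
        Sigma.ι (fun x : {x : X // f x = z'} => F.obj x.1) ⟨m.1 • x.1, by rw [hf, x.2, m.2]⟩ :=
  Sigma.ι_comp_map' _ _ _

noncomputable def coprodInd : (Translation G X ⥤ C) ⥤ (Translation G Z ⥤ C) where
  obj F := coprodIndObj f hf F
  map α :=
    { app z := Limits.Sigma.map fun x : {x : X // f x = z} => α.app x.1
      naturality z z' m := by
        dsimp only [coprodIndObj]
        ext x
        simp }
  map_id F := by
    ext z : 2
    exact Sigma.map'_id_id
  map_comp α β := by
    ext z : 2
    dsimp only [NatTrans.comp_app]
    exact (Sigma.map_comp_map _ _).symm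

lemma ι_coprodInd_map_app {F F' : Translation G X ⥤ C} (α : F ⟶ F') (z : Translation G Z)
    (x : {x : X // f x = z}) :
    Sigma.ι (fun x : {x : X // f x = z} => F.obj x.1) x ≫ ((coprodInd f hf).map α).app z =
      α.app x.1 ≫ Sigma.ι (fun x : {x : X // f x = z} => F'.obj x.1) x :=
  Sigma.ι_map (fun x : {x : X // f x = z} => α.app x.1) x

noncomputable def coprodIndAdjunction :
    coprodInd (C := C) f hf ⊣
      (Functor.whiskeringLeft (Translation G X) (Translation G Z) C).obj (translationMap f hf) :=
  Adjunction.mkOfUnitCounit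
    { unit :=
        { app F :=
            { app x := Sigma.ι (fun x' : {x' : X // f x' = f x} => F.obj x'.1) ⟨x, rfl⟩
              naturality := by
                rintro x _ ⟨g, rfl⟩
                exact (ι_coprodIndObj_map f hf F ((translationMap f hf).map ⟨g, rfl⟩)
                  ⟨x, rfl⟩).symm }
          naturality F F' α := by
            ext x
            exact (ι_coprodInd_map_app f hf α (f x) ⟨x, rfl⟩).symm }
      counit :=
        { app H :=
            { app z := Sigma.desc fun x : {x : X // f x = z} => eqToHom (congrArg H.obj x.2)
              naturality z z' m := by
                apply Sigma.hom_ext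
                rintro ⟨x, rfl⟩
                erw [← Category.assoc, ι_coprodIndObj_map f hf, Category.assoc, Sigma.ι_desc,
                  Sigma.ι_desc_assoc]
                exact map_comp_eqToHom_eq_eqToHom_comp_map H ((translationMap f hf).map _) m
                  rfl rfl _ _ }
          naturality H H' α := by
            ext z
            apply Sigma.hom_ext
            rintro ⟨x, rfl⟩
            erw [← Category.assoc, ι_coprodInd_map_app f hf, Category.assoc, Sigma.ι_desc,
              Sigma.ι_desc_assoc]
            exact eqToHom_naturality (fun z => α.app z) rfl }
      left_triangle := by
        ext F z
        apply Sigma.hom_ext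
        rintro ⟨x, rfl⟩
        show Sigma.ι (fun x' : {x' : X // f x' = f x} => F.obj x'.1) ⟨x, rfl⟩ ≫
            Limits.Sigma.map (fun x' : {x' : X // f x' = f x} =>
              Sigma.ι (fun x'' : {x'' : X // f x'' = f x'.1} => F.obj x''.1) ⟨x'.1, rfl⟩) ≫
            𝟙 _ ≫ Sigma.desc (fun x' : {x' : X // f x' = f x} =>
              eqToHom (congrArg (coprodIndObj f hf F).obj x'.2)) =
              Sigma.ι (fun x' : {x' : X // f x' = f x} => F.obj x'.1) ⟨x, rfl⟩ ≫ 𝟙 _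
        simp only [Category.id_comp, Category.comp_id, Sigma.ι_map_assoc, Sigma.ι_desc]
        erw [eqToHom_refl, Category.comp_id]
      right_triangle := by
        ext H x
        show Sigma.ι (fun x' : {x' : X // f x' = f x} => H.obj (f x'.1)) ⟨x, rfl⟩ ≫ 𝟙 _ ≫
          Sigma.desc (fun x' : {x' : X // f x' = f x} => eqToHom (congrArg H.obj x'.2)) = 𝟙 _
        simp }

end Translation

namespace GPullback

open Limits Translation

variable (t : A →[G] Y) (r : B →[G] Y)

def fiberSndEquiv (b : B) : {a : A // t a = r b} ≃ {p : GPullback t r // p.1.2 = b} where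
  toFun a := ⟨⟨(a.1, b), a.2⟩, rfl⟩
  invFun p := ⟨p.1.1.1, p.1.2.trans (congrArg r p.2)⟩
  left_inv _ := rfl
  right_inv := by
    rintro ⟨⟨⟨a, b'⟩, h⟩, rfl⟩
    rfl

variable {C : Type u} [Category.{v} C] [HasCoproducts.{0} C]

noncomputable def coprodIndBaseChange :
    coprodInd (C := C) (⇑t) (map_smul t) ⋙
      (Functor.whiskeringLeft (Translation G B) (Translation G Y) C).obj
        (translationMap r (map_smul r)) ≅
    (Functor.whiskeringLeft (Translation G (GPullback t r)) (Translation G A) C).obj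
        (translationMap (fun p : GPullback t r => (Prod.fst (Subtype.val p))) (fun _ _ => rfl)) ⋙
      coprodInd (C := C) (fun p : GPullback t r => (Prod.snd (Subtype.val p))) (fun _ _ => rfl) :=
  NatIso.ofComponents (fun F => NatIso.ofComponents
    (fun b => Sigma.whiskerEquiv (f := fun a : {a : A // t a = r b} => F.obj a.1)
      (g := fun p : {p : GPullback t r // p.1.2 = b} => F.obj p.1.1.1)
      (fiberSndEquiv t r b) fun _ => Iso.refl _)
    (by
      rintro b _ ⟨g, rfl⟩
      apply Sigma.hom_ext
      intro a
      erw [Sigma.ι_comp_map'_assoc, Sigma.ι_comp_map', Sigma.ι_comp_map'_assoc, Sigma.ι_comp_map',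
        Category.id_comp, Category.id_comp]
      rfl))
    (by
      intro F F' α
      ext b : 2
      dsimp only [coprodInd, Functor.comp_map, Functor.whiskeringLeft_obj_map, NatTrans.comp_app,
        Functor.whiskerLeft_app]
      erw [Sigma.map_comp_map', Sigma.map'_comp_map]
      congr 1
      funext a
      erw [Category.comp_id, Category.id_comp]
      rfl)

end GPullback

theorem base_change_coproduct_general
    (C : Type u) [Category.{v} C] [Limits.HasCoproducts.{0} C]
    (t : A →[G] Y) (r : B →[G] Y)
    (Lt : (Translation G A ⥤ C) ⥤ (Translation G Y ⥤ C))
    (adjt : Lt ⊣ (Functor.whiskeringLeft (Translation G A) (Translation G Y) C).obj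
      (translationMap t (map_smul t)))
    (Lt' : (Translation G (GPullback t r) ⥤ C) ⥤ (Translation G B ⥤ C))
    (adjt' : Lt' ⊣ (Functor.whiskeringLeft (Translation G (GPullback t r)) (Translation G B) C).obj
        (translationMap (fun p : GPullback t r => (Prod.snd (Subtype.val p))) (fun _ _ => rfl))) :
    Nonempty (Lt ⋙ (Functor.whiskeringLeft (Translation G B) (Translation G Y) C).obj
        (translationMap r (map_smul r)) ≅
      (Functor.whiskeringLeft (Translation G (GPullback t r)) (Translation G A) C).obj
        (translationMap (fun p : GPullback t r => (Prod.fst (Subtype.val p))) (fun _ _ => rfl)) ⋙ Lt') :=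
  ⟨Functor.isoWhiskerRight (adjt.leftAdjointUniq (Translation.coprodIndAdjunction _ _)) _ ≪≫
    GPullback.coprodIndBaseChange t r ≪≫
    Functor.isoWhiskerLeft _ ((Translation.coprodIndAdjunction _ _).leftAdjointUniq adjt')⟩

/-- base change for coproduct induction.  Given a pullback square of
finite `G`-sets `D = A ×_Y B` with projections `r' : D → A`, `t' : D → B` and maps
`t : A → Y`, `r : B → Y`, and a category `C` with coproducts, the coproduct-induction
functors (characterized as left adjoints of the precomposition functors) satisfy
`r^* ∘ t^∨_* ≅ (t')^∨_* ∘ (r')^*` as functors `Fun(B_G A, C) → Fun(B_G B, C)`. -/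
theorem base_change_coproduct [Fintype G] [Fintype A] [Fintype B] [Fintype Y]
    (C : Type u) [Category.{v} C] [Limits.HasCoproducts.{0} C]
    (t : A →[G] Y) (r : B →[G] Y)
    (Lt : (Translation G A ⥤ C) ⥤ (Translation G Y ⥤ C))
    (adjt : Lt ⊣ (Functor.whiskeringLeft (Translation G A) (Translation G Y) C).obj
      (translationMap t (map_smul t)))
    (Lt' : (Translation G (GPullback t r) ⥤ C) ⥤ (Translation G B ⥤ C))
    (adjt' : Lt' ⊣ (Functor.whiskeringLeft (Translation G (GPullback t r)) (Translation G B) C).obj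
        (translationMap (fun p : GPullback t r => (Prod.snd (Subtype.val p))) (fun _ _ => rfl))) :
    Nonempty (Lt ⋙ (Functor.whiskeringLeft (Translation G B) (Translation G Y) C).obj
        (translationMap r (map_smul r)) ≅
      (Functor.whiskeringLeft (Translation G (GPullback t r)) (Translation G A) C).obj
        (translationMap (fun p : GPullback t r => (Prod.fst (Subtype.val p))) (fun _ _ => rfl)) ⋙ Lt') :=
  base_change_coproduct_general C t r Lt adjt Lt' adjt'
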